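/- Let A ∈ ℤ^{m×n} and B ∈ ℤ^{m×l}, with entries of A bounded by Δ. If the mixed-integer program max{c^T x + d^T y : Ax + By = b, x ≥ 0, y ≥ 0, x ∈ ℤ^n, y ∈ ℝ^l} has an optimal solution and c is non-degenerate (c^T z ≠ 0 for all nonzero integer z with ‖z‖_∞ ≤ (m+2)·(m·Δ)^m), then it has an optimal solution (x*, y*) such that at least n − m components of x* are bounded by (m+2)·(m·Δ)^m and the columns of A corresponding to the remaining components of x* are linearly independent. -/

import Mathlib

/-! Let `N = (m+2)(mΔ)^m`. If the columns of `A` at the components where an optimal `x` exceeds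
`N` were linearly dependent, Cramer's rule on a maximal independent subfamily and a square
nonsingular submatrix of it would give a nonzero integer vector `z` in the kernel of `A`,
supported on those components, with `‖z‖∞ ≤ m! Δ^m ≤ N`. Then `x + z` and `x - z` are both
feasible, so optimality forces `cᵀz = 0`, contradicting non-degeneracy. Independent columns
number at most `m`, which gives the count. When `A = 0` the bound `N` may vanish; then `c ≤ 0`
and `(0, y)` is optimal instead. -/

open Matrix Function Nat Finset

theorem Matrix.exists_submatrix_det_ne_zero {K ρ κ : Type*} [Field K] [Fintype ρ] [Fintype κ]
    [DecidableEq κ] {M : Matrix ρ κ K} (h : LinearIndependent K M.col) :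
    ∃ r : κ → ρ, (M.submatrix r id).det ≠ 0 := by
  have hspan : Submodule.span K (Set.range M.row) = ⊤ := by
    apply Submodule.eq_top_of_finrank_eq
    rw [← rank_eq_finrank_span_row, ← rank_transpose, Module.finrank_fintype_fun_eq_card]
    exact LinearIndependent.rank_matrix (M := Mᵀ) h
  obtain ⟨ι', a, -, hspan', hli⟩ := exists_linearIndependent' K M.row
  let e := (Pi.basisFun K κ).indexEquiv (Module.Basis.mk hli (by rw [hspan', hspan]))
  refine ⟨a ∘ e, ?_⟩
  rw [← isUnit_iff_ne_zero, ← isUnit_iff_isUnit_det, ← linearIndependent_rows_iff_isUnit]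
  exact hli.comp e e.injective

theorem Matrix.cramer_mulVec_self {R n : Type*} [CommRing R] [Fintype n] [DecidableEq n]
    (A : Matrix n n R) (v : n → R) : A.cramer (A *ᵥ v) = A.det • v := by
  rw [cramer_eq_adjugate_mulVec, mulVec_mulVec, adjugate_mul, smul_mulVec, one_mulVec]

theorem RingHom.comp_cramer {R S n : Type*} [CommRing R] [CommRing S] [Fintype n] [DecidableEq n]
    (f : R →+* S) (A : Matrix n n R) (b : n → R) :
    f ∘ A.cramer b = (A.map f).cramer (f ∘ b) := by
  ext i
  change f (A.cramer b i) = _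
  rw [cramer_apply, cramer_apply, f.map_det, RingHom.mapMatrix_apply, map_updateCol]

theorem Matrix.abs_det_le {R n : Type*} [CommRing R] [LinearOrder R] [IsStrictOrderedRing R]
    [Fintype n] [DecidableEq n] {A : Matrix n n R} {Δ : R} (hA : ∀ i j, |A i j| ≤ Δ) :
    |A.det| ≤ (Fintype.card n)! * Δ ^ Fintype.card n := by
  simpa only [nsmul_eq_mul, AbsoluteValue.abs_apply] using det_le (abv := AbsoluteValue.abs) hA

theorem Matrix.exists_int_mulVec_eq_smul {ρ κ : Type*} [Fintype ρ] [Fintype κ] [DecidableEq κ]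
    (N : Matrix ρ κ ℤ) (u : ρ → ℤ) {Δ : ℤ} (hN : ∀ i j, |N i j| ≤ Δ) (hu : ∀ i, |u i| ≤ Δ)
    (hli : LinearIndependent ℚ (N.map (Int.cast : ℤ → ℚ)).col)
    (hspan : ∃ v : κ → ℚ, N.map (Int.cast : ℤ → ℚ) *ᵥ v = Int.cast ∘ u) :
    ∃ (μ : ℤ) (w : κ → ℤ), μ ≠ 0 ∧ |μ| ≤ (Fintype.card κ)! * Δ ^ Fintype.card κ ∧
      (∀ q, |w q| ≤ (Fintype.card κ)! * Δ ^ Fintype.card κ) ∧ N *ᵥ w = μ • u := by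
  obtain ⟨v, hv⟩ := hspan
  obtain ⟨r, hr⟩ := exists_submatrix_det_ne_zero hli
  set D := N.submatrix r id
  have hdet : ((D.det : ℤ) : ℚ) = ((N.map Int.cast).submatrix r id).det :=
    (Int.castRingHom ℚ).map_det D
  have hw : Int.cast ∘ D.cramer (u ∘ r) = (D.det : ℚ) • v := by
    have hcast : Int.cast ∘ D.cramer (u ∘ r) = ((N.map Int.cast).submatrix r id).cramer
        (Int.cast ∘ u ∘ r) := (Int.castRingHom ℚ).comp_cramer D (u ∘ r)
    rw [hcast, hdet, ← comp_assoc, ← hv]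
    exact cramer_mulVec_self _ v
  refine ⟨D.det, D.cramer (u ∘ r), fun h0 => hr ?_, abs_det_le fun _ _ => hN _ _,
    fun q => ?_, ?_⟩
  · rw [← hdet, h0, Int.cast_zero]
  · rw [cramer_apply]
    refine abs_det_le fun i j => ?_
    rw [updateCol_apply]
    split_ifs
    exacts [hu _, hN _ _]
  · funext i
    apply Int.cast_injective (α := ℚ)
    have hmul : ((N *ᵥ D.cramer (u ∘ r)) i : ℚ) =
        (N.map Int.cast *ᵥ (Int.cast ∘ D.cramer (u ∘ r))) i :=
      (Int.castRingHom ℚ).map_mulVec N _ i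
    rw [hmul, hw, mulVec_smul, hv]
    simp

theorem Matrix.mulVec_extend_zero {R m n κ : Type*} [NonUnitalNonAssocSemiring R] [Fintype n]
    [Fintype κ] (A : Matrix m n R) {e : κ → n} (he : Injective e) (w : κ → R) :
    A *ᵥ extend e w 0 = A.submatrix id e *ᵥ w := by
  funext i
  refine (Fintype.sum_of_injective e he _ _ (fun j hj => ?_) (fun q => ?_)).symm
  · simp [extend_apply' _ _ _ hj]
  · simp [he.extend_apply]

theorem Matrix.exists_int_mulVec_eq_zero_of_not_linearIndepOn {ρ ι : Type*} [Fintype ρ]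
    [Fintype ι] [DecidableEq ι] (A : Matrix ρ ι ℤ) {Δ : ℤ} (hΔ : 1 ≤ Δ)
    (hA : ∀ i j, |A i j| ≤ Δ) {S : Set ι}
    (hS : ¬ LinearIndepOn ℚ (A.map (Int.cast : ℤ → ℚ)).col S) :
    ∃ z : ι → ℤ, z ≠ 0 ∧ (∀ j, z j ≠ 0 → j ∈ S) ∧
      (∀ j, |z j| ≤ (Fintype.card ρ)! * Δ ^ Fintype.card ρ) ∧ A *ᵥ z = 0 := by
  obtain ⟨b, hbS, -, hspan, hb⟩ :=
    exists_linearIndepOn_extension (linearIndepOn_empty ℚ (A.map (Int.cast : ℤ → ℚ)).col)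
      (Set.empty_subset S)
  obtain ⟨t, htS, htb⟩ : ∃ t ∈ S, t ∉ b :=
    Set.not_subset.mp fun h => hS (by rwa [hbS.antisymm h] at hb)
  have := Fintype.ofFinite b
  have hcard : Fintype.card b ≤ Fintype.card ρ := by
    simpa only [Module.finrank_fintype_fun_eq_card] using hb.fintype_card_le_finrank
  have hbound : ((Fintype.card b)! * Δ ^ Fintype.card b : ℤ) ≤
      (Fintype.card ρ)! * Δ ^ Fintype.card ρ := by
    gcongr
  have ht : (A.map (Int.cast : ℤ → ℚ)).col t ∈
      LinearMap.range ((A.submatrix id ((↑) : b → ι)).map (Int.cast : ℤ → ℚ)).mulVecLin := by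
    rw [range_mulVecLin]
    have h := hspan (Set.mem_image_of_mem _ htS)
    rw [Set.image_eq_range] at h
    exact h
  obtain ⟨μ, w, hμ, hμb, hwb, hNw⟩ := exists_int_mulVec_eq_smul (A.submatrix id Subtype.val)
    (A.col t) (fun _ _ => hA _ _) (fun _ => hA _ _) hb (LinearMap.mem_range.mp ht)
  have hext : ∀ j ∉ b, extend Subtype.val w 0 j = 0 := fun j hj =>
    extend_apply' _ _ _ (by simpa using hj)
  -- `A (μ eₜ - w) = μ Aₜ - N w = 0`, with `w` pushed forward along the inclusion `b → ι`
  refine ⟨Pi.single t μ - extend Subtype.val w 0, fun h0 => hμ ?_, fun j hj => ?_, fun j => ?_,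
    ?_⟩
  · simpa [hext t htb] using congrFun h0 t
  · by_contra hjS
    have hjt : j ≠ t := by rintro rfl; exact hjS htS
    simp [hjt, hext j (fun h => hjS (hbS h))] at hj
  · by_cases hjt : j = t
    · subst hjt
      simpa [hext j htb] using hμb.trans hbound
    rw [Pi.sub_apply, Pi.single_eq_of_ne hjt, zero_sub, abs_neg]
    by_cases hjb : j ∈ b
    · exact (Subtype.val_injective.extend_apply w 0 ⟨j, hjb⟩).symm ▸ (hwb _).trans hbound
    · rw [hext j hjb, abs_zero]
      positivity
  · rw [mulVec_sub, mulVec_single, mulVec_extend_zero _ Subtype.val_injective, hNw,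
      op_smul_eq_smul, sub_self]

theorem LinearIndepOn.card_sub_finrank_le_card_filter_not {K V ι : Type*} [Field K]
    [AddCommGroup V] [Module K V] [FiniteDimensional K V] [Fintype ι] {v : ι → V}
    {p : ι → Prop} [DecidablePred p] (h : LinearIndepOn K v {j | p j}) :
    Fintype.card ι - Module.finrank K V ≤ #{j | ¬ p j} := by
  have hp : #{j | p j} ≤ Module.finrank K V := by
    simpa [Fintype.card_subtype] using h.fintype_card_le_finrank
  have hsplit : #{j | p j} + #{j | ¬ p j} = Fintype.card ι :=
    card_filter_add_card_filter_not (s := univ) _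
  omega

theorem Nat.factorial_mul_pow_le (m Δ : ℕ) : m ! * Δ ^ m ≤ (m + 2) * (m * Δ) ^ m :=
  calc m ! * Δ ^ m ≤ m ^ m * Δ ^ m := Nat.mul_le_mul_right _ m.factorial_le_pow
    _ = (m * Δ) ^ m := (mul_pow m Δ m).symm
    _ ≤ (m + 2) * (m * Δ) ^ m := Nat.le_mul_of_pos_left _ (by omega)

section MIP

variable {ρ ι κ : Type*} [Fintype ι] [Fintype κ] (A : Matrix ρ ι ℤ) (B : Matrix ρ κ ℤ)
  (b : ρ → ℤ) (c : ι → ℝ) (d : κ → ℝ)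

def IsMIPFeasible (x : ι → ℤ) (y : κ → ℝ) : Prop :=
  0 ≤ x ∧ 0 ≤ y ∧ ∀ i, (∑ j, (x j : ℝ) * (A i j : ℝ)) + (∑ j, y j * (B i j : ℝ)) = (b i : ℝ)

def mipObjective (x : ι → ℤ) (y : κ → ℝ) : ℝ :=
  (∑ j, c j * (x j : ℝ)) + ∑ j, d j * y j

def IsMIPOptimal (x : ι → ℤ) (y : κ → ℝ) : Prop :=
  IsMIPFeasible A B b x y ∧
    ∀ x' y', IsMIPFeasible A B b x' y' → mipObjective c d x' y' ≤ mipObjective c d x y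

variable {A B b c d} {x z : ι → ℤ} {y : κ → ℝ}

theorem IsMIPFeasible.add (h : IsMIPFeasible A B b x y) (hz : A *ᵥ z = 0) (hxz : 0 ≤ x + z) :
    IsMIPFeasible A B b (x + z) y := by
  refine ⟨hxz, h.2.1, fun i => ?_⟩
  have hzi : ∑ j, (z j : ℝ) * (A i j : ℝ) = 0 := by
    have := congrArg (Int.cast : ℤ → ℝ) (congrFun hz i)
    push_cast [mulVec, dotProduct, Pi.zero_apply] at this
    simpa only [mul_comm] using this
  simp only [Pi.add_apply, Int.cast_add, add_mul, sum_add_distrib, hzi, add_zero, h.2.2 i]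

theorem mipObjective_add : mipObjective c d (x + z) y = mipObjective c d x y + ∑ j, c j * z j := by
  simp only [mipObjective, Pi.add_apply, Int.cast_add, mul_add, sum_add_distrib]
  ring

theorem IsMIPOptimal.sum_mul_nonpos (h : IsMIPOptimal A B b c d x y) (hz : A *ᵥ z = 0)
    (hxz : 0 ≤ x + z) : ∑ j, c j * z j ≤ 0 := by
  have := h.2 _ _ (h.1.add hz hxz)
  rw [mipObjective_add] at this
  linarith

theorem IsMIPOptimal.zero_of_matrix_eq_zero [DecidableEq ι] (h : IsMIPOptimal A B b c d x y)
    (hA : A = 0) : IsMIPOptimal A B b c d 0 y := by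
  -- with `A = 0` every `x + eⱼ` stays feasible
  have hc : ∀ j, c j ≤ 0 := fun j => by
    have hx1 : 0 ≤ x + Pi.single j 1 := add_nonneg h.1.1 (Pi.single_nonneg.mpr zero_le_one)
    simpa [Pi.single_apply] using h.sum_mul_nonpos (by rw [hA, zero_mulVec]) hx1
  have hx0 : 0 ≤ x + -x := by rw [add_neg_cancel]
  have hfeas := h.1.add (by rw [hA, zero_mulVec]) hx0
  have hobj := mipObjective_add (c := c) (d := d) (x := x) (z := -x) (y := y)
  rw [add_neg_cancel] at hfeas hobj
  have hcx : 0 ≤ ∑ j, c j * ((-x) j : ℝ) := sum_nonneg fun j _ => by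
    have : (0 : ℝ) ≤ x j := by exact_mod_cast h.1.1 j
    simp only [Pi.neg_apply, Int.cast_neg]
    nlinarith [hc j]
  exact ⟨hfeas, fun x' y' h' => (h.2 x' y' h').trans (by linarith)⟩

theorem IsMIPOptimal.linearIndepOn_col_setOf_lt [Fintype ρ] [DecidableEq ι]
    (h : IsMIPOptimal A B b c d x y) {Δ N : ℤ} (hΔ : 1 ≤ Δ) (hA : ∀ i j, |A i j| ≤ Δ)
    (hN : (Fintype.card ρ)! * Δ ^ Fintype.card ρ ≤ N)
    (hc : ∀ z : ι → ℤ, z ≠ 0 → (∀ j, |z j| ≤ N) → ∑ j, c j * (z j : ℝ) ≠ 0) :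
    LinearIndepOn ℚ (A.map (Int.cast : ℤ → ℚ)).col {j | N < x j} := by
  by_contra hdep
  obtain ⟨z, hz0, hzS, hzb, hAz⟩ := A.exists_int_mulVec_eq_zero_of_not_linearIndepOn hΔ hA hdep
  have hzN : ∀ j, |z j| ≤ N := fun j => (hzb j).trans hN
  have hzx : ∀ j, |z j| ≤ x j := fun j => by
    by_cases hj : z j = 0
    · simpa [hj] using h.1.1 j
    · exact (hzN j).trans (hzS j hj).le
  have hpos := h.sum_mul_nonpos hAz fun j =>
    show 0 ≤ x j + z j by linarith [neg_abs_le (z j), hzx j]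
  have hneg := h.sum_mul_nonpos (z := -z) (by rw [mulVec_neg, hAz, neg_zero]) fun j =>
    show 0 ≤ x j + -z j by linarith [le_abs_self (z j), hzx j]
  simp only [Pi.neg_apply, Int.cast_neg, mul_neg, sum_neg_distrib, neg_nonpos] at hneg
  exact hc z hz0 hzN (le_antisymm hpos hneg)

end MIP

/-- Lemma 3 (mixed-integer version): if the MIP has an optimal solution and `c` is
non-degenerate, then it has an optimal solution `(x*, y*)` such that at least `n - m`
components of `x*` are bounded by `(m+2)(mΔ)^m` and the columns of `A` corresponding to
the remaining components are linearly independent. -/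
theorem mip_optimal_solution_few_large_components (m n l : ℕ) (Δ : ℕ)
    (A : Matrix (Fin m) (Fin n) ℤ) (B : Matrix (Fin m) (Fin l) ℤ)
    (b : Fin m → ℤ) (c : Fin n → ℝ) (d : Fin l → ℝ)
    (hΔ : ∀ i j, |A i j| ≤ (Δ : ℤ))
    (hc : ∀ z : Fin n → ℤ, z ≠ 0 → (∀ j, |z j| ≤ ((m + 2) * (m * Δ) ^ m : ℕ)) →
      (∑ j, c j * (z j : ℝ)) ≠ 0)
    (hopt : ∃ (x : Fin n → ℤ) (y : Fin l → ℝ),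
      ((0 ≤ x) ∧ (0 ≤ y) ∧
        ∀ i, (∑ j, (x j : ℝ) * (A i j : ℝ)) + (∑ j, y j * (B i j : ℝ)) = (b i : ℝ)) ∧
      ∀ (x' : Fin n → ℤ) (y' : Fin l → ℝ),
        (0 ≤ x') → (0 ≤ y') →
        (∀ i, (∑ j, (x' j : ℝ) * (A i j : ℝ)) + (∑ j, y' j * (B i j : ℝ)) = (b i : ℝ)) →
        (∑ j, c j * (x' j : ℝ)) + (∑ j, d j * y' j) ≤
          (∑ j, c j * (x j : ℝ)) + (∑ j, d j * y j)) :
    ∃ (x : Fin n → ℤ) (y : Fin l → ℝ),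
      ((0 ≤ x) ∧ (0 ≤ y) ∧
        ∀ i, (∑ j, (x j : ℝ) * (A i j : ℝ)) + (∑ j, y j * (B i j : ℝ)) = (b i : ℝ)) ∧
      (∀ (x' : Fin n → ℤ) (y' : Fin l → ℝ),
        (0 ≤ x') → (0 ≤ y') →
        (∀ i, (∑ j, (x' j : ℝ) * (A i j : ℝ)) + (∑ j, y' j * (B i j : ℝ)) = (b i : ℝ)) →
        (∑ j, c j * (x' j : ℝ)) + (∑ j, d j * y' j) ≤
          (∑ j, c j * (x j : ℝ)) + (∑ j, d j * y j)) ∧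
      n - m ≤ (Finset.univ.filter
        (fun j => x j ≤ ((m + 2) * (m * Δ) ^ m : ℕ))).card ∧
      LinearIndependent ℚ
        (fun j : {j : Fin n // ((m + 2) * (m * Δ) ^ m : ℕ) < x j} =>
          (fun i => (A i j.1 : ℚ))) := by
  set N : ℕ := (m + 2) * (m * Δ) ^ m
  obtain ⟨x, y, hfeas, hbest⟩ := hopt
  have hxy : IsMIPOptimal A B b c d x y :=
    ⟨hfeas, fun x' y' h' => hbest x' y' h'.1 h'.2.1 h'.2.2⟩
  obtain ⟨x, y, hopt, hli⟩ : ∃ x y, IsMIPOptimal A B b c d x y ∧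
      LinearIndepOn ℚ (A.map (Int.cast : ℤ → ℚ)).col {j | (N : ℤ) < x j} := by
    by_cases hA : A = 0
    · refine ⟨0, y, hxy.zero_of_matrix_eq_zero hA, ?_⟩
      have hempty : {j | (N : ℤ) < (0 : Fin n → ℤ) j} = ∅ := by ext; simp
      rw [hempty]
      exact linearIndepOn_empty ℚ _
    · obtain ⟨i, j, hij⟩ : ∃ i j, A i j ≠ 0 := by
        by_contra! h
        exact hA (Matrix.ext h)
      have hΔ1 : (1 : ℤ) ≤ Δ := (Int.one_le_abs hij).trans (hΔ i j)
      refine ⟨x, y, hxy, hxy.linearIndepOn_col_setOf_lt hΔ1 hΔ ?_ hc⟩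
      rw [Fintype.card_fin]
      exact_mod_cast Nat.factorial_mul_pow_le m Δ
  refine ⟨x, y, hopt.1, fun x' y' hx' hy' h' => hopt.2 x' y' ⟨hx', hy', h'⟩, ?_, hli⟩
  simpa only [not_lt, Module.finrank_fintype_fun_eq_card, Fintype.card_fin] using
    hli.card_sub_finrank_le_card_filter_not
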